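/- Let A : Matrix (Fin 4) (Fin 4) ℝ be orthogonal (Aᵀ * A = 1). Then A maps the vertex set V := {σ·e_i + σ'·e_j : i ≠ j in Fin 4, σ, σ' ∈ {-1,1}} into itself (A.mulVec v ∈ V for all v ∈ V) if and only if every entry of A is a half-integer (for all i, j there exists n : ℤ with A i j = n/2). Consequently the symmetry group of the 24-cell, i.e. the group of orthogonal matrices preserving V, is exactly O(4;ℤ[1/2]) and has order 2^7 · 3^2 = 1152. -/
import Mathlib

open Matrix

/-- The standard basis vector `e_i` of `ℝ^4`. -/
noncomputable def er4 (i : Fin 4) : Fin 4 → ℝ := Pi.single i 1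

/-- The vertex set of the Euclidean 24-cell: the 24 vectors `σ·e_i + σ'·e_j`
with `i ≠ j` and `σ, σ' ∈ {-1,1}`. -/
def vertices24 : Set (Fin 4 → ℝ) :=
  {v | ∃ (i j : Fin 4) (σ σ' : ℝ), i ≠ j ∧ (σ = -1 ∨ σ = 1) ∧ (σ' = -1 ∨ σ' = 1) ∧
    v = σ • er4 i + σ' • er4 j}

set_option maxHeartbeats 1000000 in
lemma sumsq8 (a b c d : ℤ) (ha : -2 ≤ a ∧ a ≤ 2) (hb : -2 ≤ b ∧ b ≤ 2)
    (hc : -2 ≤ c ∧ c ≤ 2) (hd : -2 ≤ d ∧ d ≤ 2)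
    (h : a^2 + b^2 + c^2 + d^2 = 8) :
    ((a = -2 ∨ a = 2) ∧ (b = -2 ∨ b = 2) ∧ c = 0 ∧ d = 0) ∨
    ((a = -2 ∨ a = 2) ∧ (c = -2 ∨ c = 2) ∧ b = 0 ∧ d = 0) ∨
    ((a = -2 ∨ a = 2) ∧ (d = -2 ∨ d = 2) ∧ b = 0 ∧ c = 0) ∨
    ((b = -2 ∨ b = 2) ∧ (c = -2 ∨ c = 2) ∧ a = 0 ∧ d = 0) ∨
    ((b = -2 ∨ b = 2) ∧ (d = -2 ∨ d = 2) ∧ a = 0 ∧ c = 0) ∨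
    ((c = -2 ∨ c = 2) ∧ (d = -2 ∨ d = 2) ∧ a = 0 ∧ b = 0) := by
  obtain ⟨ha1, ha2⟩ := ha; obtain ⟨hb1, hb2⟩ := hb
  obtain ⟨hc1, hc2⟩ := hc; obtain ⟨hd1, hd2⟩ := hd
  interval_cases a <;> interval_cases b <;> interval_cases c <;> interval_cases d <;>
    revert h <;> decide

lemma key24 (u : Fin 4 → ℤ) (hb : ∀ k, -2 ≤ u k ∧ u k ≤ 2) (h : ∑ k, u k ^ 2 = 8) :
    ∃ a b : Fin 4, a ≠ b ∧ (u a = -2 ∨ u a = 2) ∧ (u b = -2 ∨ u b = 2) ∧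
      ∀ k, k ≠ a → k ≠ b → u k = 0 := by
  rw [Fin.sum_univ_four] at h
  rcases sumsq8 (u 0) (u 1) (u 2) (u 3) (hb 0) (hb 1) (hb 2) (hb 3) h with h|h|h|h|h|h
  · exact ⟨0, 1, by decide, h.1, h.2.1, fun k h0 h1 => by fin_cases k <;> simp_all⟩
  · exact ⟨0, 2, by decide, h.1, h.2.1, fun k h0 h1 => by fin_cases k <;> simp_all⟩
  · exact ⟨0, 3, by decide, h.1, h.2.1, fun k h0 h1 => by fin_cases k <;> simp_all⟩
  · exact ⟨1, 2, by decide, h.1, h.2.1, fun k h0 h1 => by fin_cases k <;> simp_all⟩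
  · exact ⟨1, 3, by decide, h.1, h.2.1, fun k h0 h1 => by fin_cases k <;> simp_all⟩
  · exact ⟨2, 3, by decide, h.1, h.2.1, fun k h0 h1 => by fin_cases k <;> simp_all⟩

lemma vert_entries (w : Fin 4 → ℝ) (hw : w ∈ vertices24) (k : Fin 4) :
    ∃ m : ℤ, w k = m := by
  obtain ⟨i, j, σ, σ', hij, hσ, hσ', rfl⟩ := hw
  have h1 : ∀ (l : Fin 4), ∃ m : ℤ, er4 l k = m := by
    intro l
    by_cases h : k = l
    · exact ⟨1, by simp [er4, Pi.single_apply, h]⟩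
    · exact ⟨0, by simp [er4, Pi.single_apply, h]⟩
  obtain ⟨x, hx⟩ := h1 i
  obtain ⟨y, hy⟩ := h1 j
  obtain ⟨s, hs⟩ : ∃ s : ℤ, σ = (s : ℝ) := by
    rcases hσ with rfl|rfl
    exacts [⟨-1, by norm_num⟩, ⟨1, by norm_num⟩]
  obtain ⟨s', hs'⟩ : ∃ s : ℤ, σ' = (s : ℝ) := by
    rcases hσ' with rfl|rfl
    exacts [⟨-1, by norm_num⟩, ⟨1, by norm_num⟩]
  refine ⟨s * x + s' * y, ?_⟩
  simp only [Pi.add_apply, Pi.smul_apply, smul_eq_mul, hx, hy, hs, hs']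
  push_cast
  ring

lemma horth_of (A : Matrix (Fin 4) (Fin 4) ℝ) (hA : Aᵀ * A = 1) (a b : Fin 4) :
    ∑ k, A k a * A k b = if a = b then 1 else 0 := by
  have := congrFun (congrFun hA a) b
  simpa [Matrix.mul_apply, Matrix.one_apply, Matrix.transpose_apply] using this

lemma half_of_preserves (A : Matrix (Fin 4) (Fin 4) ℝ)
    (hp : ∀ v ∈ vertices24, A.mulVec v ∈ vertices24) :
    ∀ i j, ∃ n : ℤ, A i j = (n : ℝ) / 2 := by
  intro i j
  set j' : Fin 4 := if j = 0 then 1 else 0 with hj'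
  have hne : j ≠ j' := by
    by_cases h : j = 0 <;> simp [hj', h]
  have hv1 : (1:ℝ) • er4 j + (1:ℝ) • er4 j' ∈ vertices24 :=
    ⟨j, j', 1, 1, hne, Or.inr rfl, Or.inr rfl, rfl⟩
  have hv2 : (1:ℝ) • er4 j + (-1:ℝ) • er4 j' ∈ vertices24 :=
    ⟨j, j', 1, -1, hne, Or.inr rfl, Or.inl rfl, rfl⟩
  obtain ⟨m1, hm1⟩ := vert_entries _ (hp _ hv1) i
  obtain ⟨m2, hm2⟩ := vert_entries _ (hp _ hv2) i
  refine ⟨m1 + m2, ?_⟩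
  have e1 : ∀ (c : ℝ) (l : Fin 4), (A.mulVec (c • er4 l)) i = c * A i l := by
    intro c l
    rw [mulVec_smul, er4, mulVec_single]
    simp
  have hsum : (A.mulVec ((1:ℝ) • er4 j + (1:ℝ) • er4 j')) i
      + (A.mulVec ((1:ℝ) • er4 j + (-1:ℝ) • er4 j')) i = 2 * A i j := by
    simp only [mulVec_add, Pi.add_apply, e1]
    ring
  rw [hm1, hm2] at hsum
  push_cast
  linarith

lemma preserves_of_half (A : Matrix (Fin 4) (Fin 4) ℝ) (hA : Aᵀ * A = 1)
    (hhalf : ∀ i j, ∃ n : ℤ, A i j = (n : ℝ) / 2) :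
    ∀ v ∈ vertices24, A.mulVec v ∈ vertices24 := by
  intro v hv
  obtain ⟨i, j, σ, σ', hij, hσ, hσ', rfl⟩ := hv
  choose M hM using hhalf
  obtain ⟨s, hs, hs2⟩ : ∃ s : ℤ, ((s : ℝ) = σ ∧ s ^ 2 = 1) := by
    rcases hσ with rfl|rfl
    exacts [⟨-1, by norm_num⟩, ⟨1, by norm_num⟩]
  obtain ⟨s', hs', hs'2⟩ : ∃ s : ℤ, ((s : ℝ) = σ' ∧ s ^ 2 = 1) := by
    rcases hσ' with rfl|rfl
    exacts [⟨-1, by norm_num⟩, ⟨1, by norm_num⟩]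
  set u : Fin 4 → ℤ := fun k => s * M k i + s' * M k j with hu
  have hZ : ∀ a b, ∑ k, M k a * M k b = if a = b then 4 else 0 := by
    intro a b
    have h1 := horth_of A hA a b
    have h2 : ∑ k, (M k a : ℝ) * (M k b : ℝ) = 4 * (if a = b then 1 else 0) := by
      rw [← h1, Finset.mul_sum]
      refine Finset.sum_congr rfl fun k _ => ?_
      rw [hM k a, hM k b]
      ring
    have h3 : ((∑ k, M k a * M k b : ℤ) : ℝ) = ((if a = b then (4:ℤ) else 0 : ℤ) : ℝ) := by
      push_cast
      rw [h2]
      split_ifs <;> norm_num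
    exact_mod_cast h3
  have hcast : ∀ k, (A.mulVec (σ • er4 i + σ' • er4 j)) k = (u k : ℝ) / 2 := by
    intro k
    have e1 : ∀ (c : ℝ) (l : Fin 4), (A.mulVec (c • er4 l)) k = c * A k l := by
      intro c l
      rw [mulVec_smul, er4, mulVec_single]
      simp
    simp only [mulVec_add, Pi.add_apply, e1, hM, hu, ← hs, ← hs']
    push_cast
    ring
  have hsum : ∑ k, u k ^ 2 = 8 := by
    have expand : ∀ k ∈ Finset.univ, u k ^ 2 =
        s ^ 2 * (M k i * M k i) + s' ^ 2 * (M k j * M k j)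
          + (2 * s * s') * (M k i * M k j) := fun k _ => by simp only [hu]; ring
    rw [Finset.sum_congr rfl expand, Finset.sum_add_distrib, Finset.sum_add_distrib,
      ← Finset.mul_sum, ← Finset.mul_sum, ← Finset.mul_sum, hZ i i, hZ j j, hZ i j,
      if_pos rfl, if_neg hij, hs2, hs'2]
    norm_num
  have hbound : ∀ k, -2 ≤ u k ∧ u k ≤ 2 := by
    intro k
    have h8 : u k ^ 2 ≤ 8 := by
      rw [← hsum]
      exact Finset.single_le_sum (fun r _ => sq_nonneg (u r)) (Finset.mem_univ k)
    constructor <;> nlinarith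
  obtain ⟨a, b, hab, hua, hub, hz⟩ := key24 u hbound hsum
  refine ⟨a, b, (u a : ℝ) / 2, (u b : ℝ) / 2, hab, ?_, ?_, ?_⟩
  · rcases hua with h|h <;> rw [h] <;> norm_num
  · rcases hub with h|h <;> rw [h] <;> norm_num
  · funext k
    rw [hcast k]
    by_cases hka : k = a
    · subst hka
      simp [er4, Pi.single_apply, hab, Ne.symm hab]
    · by_cases hkb : k = b
      · subst hkb
        simp [er4, Pi.single_apply, Ne.symm hab, hab]
      · have := hz k hka hkb
        simp [er4, Pi.single_apply, hka, hkb, this]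

lemma preserves_iff_half (A : Matrix (Fin 4) (Fin 4) ℝ) (hA : Aᵀ * A = 1) :
    (∀ v ∈ vertices24, A.mulVec v ∈ vertices24) ↔
      ∀ i j, ∃ n : ℤ, A i j = (n : ℝ) / 2 :=
  ⟨half_of_preserves A, preserves_of_half A hA⟩


abbrev V4 := ℤ × ℤ × ℤ × ℤ
def dotV (a b : V4) : ℤ := a.1*b.1 + a.2.1*b.2.1 + a.2.2.1*b.2.2.1 + a.2.2.2*b.2.2.2
def colsL : List V4 :=
  [(2,0,0,0),(-2,0,0,0),(0,2,0,0),(0,-2,0,0),(0,0,2,0),(0,0,-2,0),(0,0,0,2),(0,0,0,-2),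
   (1,1,1,1),(1,1,1,-1),(1,1,-1,1),(1,1,-1,-1),(1,-1,1,1),(1,-1,1,-1),(1,-1,-1,1),(1,-1,-1,-1),
   (-1,1,1,1),(-1,1,1,-1),(-1,1,-1,1),(-1,1,-1,-1),(-1,-1,1,1),(-1,-1,1,-1),(-1,-1,-1,1),(-1,-1,-1,-1)]
def colsF : Finset V4 := colsL.toFinset
def pairsF : Finset (V4 × V4) := (colsF ×ˢ colsF).filter (fun p => dotV p.1 p.2 = 0)
abbrev T := (V4 × V4) × (V4 × V4)
def Fq : Finset T := (pairsF ×ˢ pairsF).filter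
  (fun t => dotV t.1.1 t.2.1 = 0 ∧ dotV t.1.1 t.2.2 = 0 ∧
            dotV t.1.2 t.2.1 = 0 ∧ dotV t.1.2 t.2.2 = 0)

def Pint (N : Fin 4 → Fin 4 → ℤ) : Prop :=
  ∀ j j', ∑ k, N j k * N j' k = if j = j' then 4 else 0

def vecOf (v : V4) : Fin 4 → ℤ := ![v.1, v.2.1, v.2.2.1, v.2.2.2]
def tab (t : T) : Fin 4 → V4
  | 0 => t.1.1 | 1 => t.1.2 | 2 => t.2.1 | 3 => t.2.2
def funOf (t : T) : Fin 4 → Fin 4 → ℤ := fun j => vecOf (tab t j)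
def tupleOf (N : Fin 4 → Fin 4 → ℤ) : T :=
  (((N 0 0, N 0 1, N 0 2, N 0 3), (N 1 0, N 1 1, N 1 2, N 1 3)),
   ((N 2 0, N 2 1, N 2 2, N 2 3), (N 3 0, N 3 1, N 3 2, N 3 3)))

lemma funOf_tupleOf (N : Fin 4 → Fin 4 → ℤ) : funOf (tupleOf N) = N := by
  funext j k
  fin_cases j <;> fin_cases k <;> rfl

lemma tupleOf_funOf (t : T) : tupleOf (funOf t) = t := rfl

lemma dot_eq (v w : V4) : ∑ k, vecOf v k * vecOf w k = dotV v w := by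
  simp [vecOf, dotV, Fin.sum_univ_four]

lemma dot_comm (v w : V4) : dotV v w = dotV w v := by unfold dotV; ring

lemma self_dot (v : V4) (h : v ∈ colsF) : dotV v v = 4 := by revert h; revert v; decide

lemma col_class (a b c d : ℤ) (ha : -2 ≤ a ∧ a ≤ 2) (hb : -2 ≤ b ∧ b ≤ 2)
    (hc : -2 ≤ c ∧ c ≤ 2) (hd : -2 ≤ d ∧ d ≤ 2)
    (h : a*a + b*b + c*c + d*d = 4) : (a, b, c, d) ∈ colsF := by
  obtain ⟨ha1, ha2⟩ := ha; obtain ⟨hb1, hb2⟩ := hb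
  obtain ⟨hc1, hc2⟩ := hc; obtain ⟨hd1, hd2⟩ := hd
  interval_cases a <;> interval_cases b <;> interval_cases c <;> interval_cases d <;>
    revert h <;> decide

lemma mem_of_pint (N : Fin 4 → Fin 4 → ℤ) (h : Pint N) : tupleOf N ∈ Fq := by
  have hcol : ∀ j, (N j 0, N j 1, N j 2, N j 3) ∈ colsF := by
    intro j
    have hs := h j j
    rw [if_pos rfl] at hs
    have hb : ∀ k, -2 ≤ N j k ∧ N j k ≤ 2 := by
      intro k
      have h4 : N j k * N j k ≤ 4 := by
        rw [← hs]
        exact Finset.single_le_sum (fun r _ => mul_self_nonneg (N j r)) (Finset.mem_univ k)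
      constructor <;> nlinarith
    refine col_class _ _ _ _ (hb 0) (hb 1) (hb 2) (hb 3) ?_
    rw [← hs, Fin.sum_univ_four]
  have hdot : ∀ j j', j ≠ j' →
      dotV (N j 0, N j 1, N j 2, N j 3) (N j' 0, N j' 1, N j' 2, N j' 3) = 0 := by
    intro j j' hjj
    have := h j j'
    rw [if_neg hjj, Fin.sum_univ_four] at this
    simpa [dotV] using this
  rw [Fq, Finset.mem_filter, Finset.mem_product, pairsF, Finset.mem_filter,
    Finset.mem_filter, Finset.mem_product, Finset.mem_product]
  exact ⟨⟨⟨⟨hcol 0, hcol 1⟩, hdot 0 1 (by decide)⟩, ⟨⟨hcol 2, hcol 3⟩, hdot 2 3 (by decide)⟩⟩,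
    hdot 0 2 (by decide), hdot 0 3 (by decide), hdot 1 2 (by decide), hdot 1 3 (by decide)⟩

set_option linter.constructorNameAsVariable false in
lemma pint_of_mem (t : T) (h : t ∈ Fq) : Pint (funOf t) := by
  rw [Fq, Finset.mem_filter, Finset.mem_product, pairsF, Finset.mem_filter,
    Finset.mem_filter, Finset.mem_product, Finset.mem_product] at h
  obtain ⟨⟨⟨⟨hm0, hm1⟩, h01⟩, ⟨⟨hm2, hm3⟩, h23⟩⟩, h02, h03, h12, h13⟩ := h
  intro j j'
  show ∑ k, vecOf (tab t j) k * vecOf (tab t j') k = _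
  rw [dot_eq]
  fin_cases j <;> fin_cases j' <;>
    simp only [tab] <;>
    first
      | simpa using self_dot _ hm0
      | simpa using self_dot _ hm1
      | simpa using self_dot _ hm2
      | simpa using self_dot _ hm3
      | simpa using h01 | simpa using h02 | simpa using h03
      | simpa using h12 | simpa using h13 | simpa using h23
      | (rw [dot_comm]; first
          | simpa using h01 | simpa using h02 | simpa using h03
          | simpa using h12 | simpa using h13 | simpa using h23)

set_option maxRecDepth 1000000 in
set_option maxHeartbeats 8000000 in
lemma Fq_card : Fq.card = 1152 := by decide

lemma floor_half (x : ℝ) (n : ℤ) (h : x = (n : ℝ) / 2) : ((⌊2 * x⌋ : ℤ) : ℝ) = 2 * x := by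
  rw [h]
  have : 2 * ((n : ℝ) / 2) = (n : ℝ) := by ring
  rw [this, Int.floor_intCast]

noncomputable def e2 :
    {B : Matrix (Fin 4) (Fin 4) ℝ // Bᵀ * B = 1 ∧ ∀ i j, ∃ n : ℤ, B i j = (n : ℝ) / 2} ≃
    {N : Fin 4 → Fin 4 → ℤ // Pint N} where
  toFun B := ⟨fun j k => ⌊2 * B.1 k j⌋, by
    intro a b
    have h1 := horth_of B.1 B.2.1 a b
    have key : ∀ k j, ((⌊2 * B.1 k j⌋ : ℤ) : ℝ) = 2 * B.1 k j := fun k j =>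
      floor_half _ _ (B.2.2 k j).choose_spec
    have h3 : ((∑ k, ⌊2 * B.1 k a⌋ * ⌊2 * B.1 k b⌋ : ℤ) : ℝ)
        = ((if a = b then (4:ℤ) else 0 : ℤ) : ℝ) := by
      push_cast
      calc ∑ k, ((⌊2 * B.1 k a⌋ : ℤ) : ℝ) * ((⌊2 * B.1 k b⌋ : ℤ) : ℝ)
          = ∑ k, (2 * B.1 k a) * (2 * B.1 k b) := by
            refine Finset.sum_congr rfl fun k _ => ?_
            rw [key k a, key k b]
        _ = 4 * ∑ k, B.1 k a * B.1 k b := by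
            rw [Finset.mul_sum]
            exact Finset.sum_congr rfl fun k _ => by ring
        _ = if a = b then (4:ℝ) else 0 := by rw [h1]; split_ifs <;> norm_num
    exact_mod_cast h3⟩
  invFun N := ⟨Matrix.of fun k j => ((N.1 j k : ℤ) : ℝ) / 2, by
    constructor
    · ext a b
      have := N.2 a b
      have h3 : ((∑ k, N.1 a k * N.1 b k : ℤ) : ℝ) = ((if a = b then (4:ℤ) else 0 : ℤ) : ℝ) := by
        exact_mod_cast congrArg (Int.cast : ℤ → ℝ) this
      push_cast at h3
      simp only [Matrix.mul_apply, Matrix.transpose_apply, Matrix.one_apply, Matrix.of_apply]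
      calc ∑ k, ((N.1 a k : ℝ) / 2) * ((N.1 b k : ℝ) / 2)
          = (∑ k, (N.1 a k : ℝ) * (N.1 b k : ℝ)) / 4 := by
            rw [Finset.sum_div]
            exact Finset.sum_congr rfl fun k _ => by ring
        _ = (if a = b then (4:ℝ) else 0) / 4 := by rw [h3]
        _ = if a = b then (1:ℝ) else 0 := by split_ifs <;> norm_num
    · exact fun i j => ⟨N.1 j i, rfl⟩⟩
  left_inv B := by
    apply Subtype.ext
    have key : ∀ k j, ((⌊2 * B.1 k j⌋ : ℤ) : ℝ) = 2 * B.1 k j := fun k j =>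
      floor_half _ _ (B.2.2 k j).choose_spec
    funext k j
    simp only [Matrix.of_apply]
    rw [key k j]
    ring
  right_inv N := by
    apply Subtype.ext
    funext j k
    simp only [Matrix.of_apply]
    have : 2 * ((N.1 j k : ℝ) / 2) = ((N.1 j k : ℤ) : ℝ) := by ring
    rw [this, Int.floor_intCast]

set_option maxRecDepth 100000 in
/-- An orthogonal matrix preserves the vertex set of the 24-cell if and only if all its
entries are half-integers; consequently the symmetry group of the 24-cell is exactly
`O(4;ℤ[1/2])` and has order `2^7 · 3^2 = 1152`. -/
theorem symmetry_group_of_24cell (A : Matrix (Fin 4) (Fin 4) ℝ) (hA : Aᵀ * A = 1) :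
    ((∀ v ∈ vertices24, A.mulVec v ∈ vertices24) ↔
      ∀ i j, ∃ n : ℤ, A i j = (n : ℝ) / 2) ∧
    Nat.card {B : Matrix (Fin 4) (Fin 4) ℝ //
      Bᵀ * B = 1 ∧ ∀ v ∈ vertices24, B.mulVec v ∈ vertices24} = 1152 := by
  constructor
  · exact preserves_iff_half A hA
  · have e1 : {B : Matrix (Fin 4) (Fin 4) ℝ //
        Bᵀ * B = 1 ∧ ∀ v ∈ vertices24, B.mulVec v ∈ vertices24} ≃
        {B : Matrix (Fin 4) (Fin 4) ℝ //
          Bᵀ * B = 1 ∧ ∀ i j, ∃ n : ℤ, B i j = (n : ℝ) / 2} :=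
      Equiv.subtypeEquivRight fun B =>
        and_congr_right fun hB => preserves_iff_half B hB
    have e4 : {N : Fin 4 → Fin 4 → ℤ // Pint N} ≃ {t : T // t ∈ Fq} :=
      { toFun := fun N => ⟨tupleOf N.1, mem_of_pint N.1 N.2⟩
        invFun := fun t => ⟨funOf t.1, pint_of_mem t.1 t.2⟩
        left_inv := fun N => Subtype.ext (funOf_tupleOf N.1)
        right_inv := fun t => Subtype.ext (tupleOf_funOf t.1) }
    rw [Nat.card_congr ((e1.trans e2).trans e4), Nat.card_eq_fintype_card,
      Fintype.card_coe, Fq_card]
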